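/- arXiv:1301.3222 — 2 statements merged into one kernel-verified Lean document; each statement's English description precedes it below -/
import Mathlib

section
/- Let (A, m) be a commutative local ring, let f : A → B be a homomorphism of commutative rings, let I be a proper ideal of A and J an ideal of B such that f restricts to a bijection from I onto J. Assume that the map on unit groups Bˣ → (B/J)ˣ induced by the quotient B → B/J is surjective (as holds, for instance, when B is a semilocal ring). Then the natural homomorphism of abelian groups Bˣ/f(Aˣ) → (B/J)ˣ/g((A/I)ˣ), induced by the reductions A → A/I and B → B/J (where g : A/I → B/J is the ring map induced by f), is an isomorphism. -/
/-- **Proposition 2.6 (local form).** Let `(A, m)` be a commutative local ring, `f : A → B` a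
homomorphism of commutative rings, `I ⊊ A` a proper ideal and `J` an ideal of `B` such that `f`
restricts to a bijection from `I` onto `J`.  Assume the induced map on unit groups
`Bˣ → (B/J)ˣ` is surjective.  Then the natural map
`Bˣ/f(Aˣ) → (B/J)ˣ/g((A/I)ˣ)` induced by the two reductions (where `g : A/I → B/J` is the ring
map induced by `f`) is an isomorphism of abelian groups. -/
theorem units_quotient_mulEquiv_of_bijOn_ideal
    {A B : Type*} [CommRing A] [IsLocalRing A] [CommRing B]
    (f : A →+* B) (I : Ideal A) (J : Ideal B) (hI : I ≠ ⊤)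
    (hbij : Set.BijOn f I J)
    (hsurj : Function.Surjective
      (Units.map (Ideal.Quotient.mk J).toMonoidHom : Bˣ → (B ⧸ J)ˣ))
    (g : A ⧸ I →+* B ⧸ J)
    (hg : ∀ x : A, g (Ideal.Quotient.mk I x) = Ideal.Quotient.mk J (f x)) :
    ∃ φ : (Bˣ ⧸ (Units.map f.toMonoidHom : Aˣ →* Bˣ).range) ≃*
        ((B ⧸ J)ˣ ⧸ (Units.map g.toMonoidHom : (A ⧸ I)ˣ →* (B ⧸ J)ˣ).range),
      ∀ u : Bˣ,
        φ (QuotientGroup.mk u)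
          = QuotientGroup.mk (Units.map (Ideal.Quotient.mk J).toMonoidHom u) := by
  have hIm : I ≤ IsLocalRing.maximalIdeal A := IsLocalRing.le_maximalIdeal hI
  -- units of A/I lift to units of A
  have hliftA : ∀ v : (A ⧸ I)ˣ, ∃ a : Aˣ,
      Units.map (Ideal.Quotient.mk I).toMonoidHom a = v := by
    intro v
    obtain ⟨a, ha⟩ := Ideal.Quotient.mk_surjective (v : A ⧸ I)
    obtain ⟨b, hb⟩ := Ideal.Quotient.mk_surjective ((v⁻¹ : (A ⧸ I)ˣ) : A ⧸ I)
    have hab : (1 : A) - a * b ∈ I := by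
      rw [← Ideal.Quotient.eq_zero_iff_mem]
      rw [map_sub, map_mul, ha, hb]
      simp
    have hunit : IsUnit (a * b) := by
      have := IsLocalRing.isUnit_one_sub_self_of_mem_nonunits ((1 : A) - a * b)
        (hIm hab)
      simpa using this
    have hau : IsUnit a := isUnit_of_mul_isUnit_left hunit
    refine ⟨hau.unit, Units.ext ?_⟩
    simpa using ha
  -- the candidate surjective homomorphism
  set N := (Units.map g.toMonoidHom : (A ⧸ I)ˣ →* (B ⧸ J)ˣ).range
  set ψ : Bˣ →* ((B ⧸ J)ˣ ⧸ N) :=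
    (QuotientGroup.mk' N).comp (Units.map (Ideal.Quotient.mk J).toMonoidHom)
  have hψsurj : Function.Surjective ψ :=
    (QuotientGroup.mk'_surjective N).comp hsurj
  have hker : ψ.ker = (Units.map f.toMonoidHom : Aˣ →* Bˣ).range := by
    ext u
    constructor
    · intro hu
      have : (Units.map (Ideal.Quotient.mk J).toMonoidHom u : (B ⧸ J)ˣ) ∈ N := by
        simpa [ψ, MonoidHom.mem_ker, QuotientGroup.eq_one_iff] using hu
      obtain ⟨v, hv⟩ := this
      obtain ⟨a, ha⟩ := hliftA v
      rw [← ha] at hv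
      have h1 : Ideal.Quotient.mk J (f (a : A)) = Ideal.Quotient.mk J (u : B) := by
        have := congrArg Units.val hv
        simpa [hg] using this
      have hcoe : Ideal.Quotient.mk J ((u : B) * (f ((a⁻¹ : Aˣ) : A))) = 1 := by
        rw [map_mul, ← h1, ← map_mul, ← map_mul, Units.mul_inv, map_one, map_one]
      have hmem : (u : B) * (f ((a⁻¹ : Aˣ) : A)) - 1 ∈ J := by
        rw [← Ideal.Quotient.eq_zero_iff_mem, map_sub, hcoe]; simp
      obtain ⟨i, hiI, hif⟩ := hbij.2.2 hmem
      have hiu : IsUnit ((1 : A) + i) := by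
        have := IsLocalRing.isUnit_one_sub_self_of_mem_nonunits (-i)
          (hIm (I.neg_mem hiI))
        simpa using this
      have h4 : (u : B) * f ((a⁻¹ : Aˣ) : A) = f (1 + i) := by
        rw [map_add, map_one]; linear_combination -hif
      have key : (u : B) = f ((a : A) * (1 + i)) := by
        calc (u : B) = (u : B) * (f ((a⁻¹ : Aˣ) : A) * f (a : A)) := by
              rw [← map_mul, Units.inv_mul, map_one, mul_one]
          _ = f (1 + i) * f (a : A) := by rw [← mul_assoc, h4]
          _ = f ((a : A) * (1 + i)) := by rw [← map_mul, mul_comm]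
      refine ⟨a * hiu.unit, Units.ext ?_⟩
      simp [key, IsUnit.unit_spec]
    · rintro ⟨a, rfl⟩
      have : ψ (Units.map f.toMonoidHom a) = 1 := by
        simp only [ψ, MonoidHom.comp_apply, QuotientGroup.mk'_apply,
          QuotientGroup.eq_one_iff]
        refine ⟨Units.map (Ideal.Quotient.mk I).toMonoidHom a, Units.ext ?_⟩
        simp [hg]
      exact this
  refine ⟨(QuotientGroup.quotientMulEquivOfEq hker.symm).trans
      (QuotientGroup.quotientKerEquivOfSurjective ψ hψsurj), fun u => ?_⟩
  rfl
end

section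
/- Let A be a Noetherian local ring of Krull dimension one with no embedded primes (Serre's condition S₁) whose residue field has characteristic zero. Let I be the nilradical of A, let K be the total quotient ring of A, and let IK denote the A-submodule of K generated by I. Then K/IK is the total quotient ring of the reduced ring A_red = A/I, and there is an exact sequence of abelian groups 0 → IK/I → Cart A → Cart A_red → 0: that is, the map Kˣ/Aˣ → (K/IK)ˣ/(A_red)ˣ induced by the quotient K → K/IK is surjective, and its kernel is isomorphic as a group to the additive group IK/I. -/
/-!
Since the residue field has characteristic zero, `A` (hence `K`) is a `ℚ`-algebra, and the
truncated exponential maps any nil ideal `N` bijectively onto the units `1 + N`. Units lift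
modulo the nil ideal `IK`, so `Cart A → Cart A_red` is surjective; a class in its kernel is
represented by a unit in `1 + IK = exp (IK)`, and it is trivial exactly when that unit lies in
`Aˣ ∩ (1 + IK) = 1 + I = exp I`. Hence the kernel is `IK/I`.

By `S₁` every zero divisor of `A` lies in a minimal prime, so the nonzerodivisors of `A` are
exactly the lifts of those of `A_red`, and `K/IK`, the localization of `A_red` at their images,
is the total quotient ring of `A_red`.
-/

set_option maxHeartbeats 1000000
set_option synthInstance.maxHeartbeats 1000000

/-- For a ring homomorphism `f : R → S`, the quotient of the unit group `Sˣ` by the image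
of the unit group of `R`. -/
def UnitsQuot {R S : Type*} [CommRing R] [CommRing S] (f : R →+* S) : Type _ :=
  Sˣ ⧸ (Units.map f.toMonoidHom : Rˣ →* Sˣ).range

noncomputable instance UnitsQuot.instCommGroup {R S : Type*} [CommRing R] [CommRing S]
    (f : R →+* S) : CommGroup (UnitsQuot f) :=
  QuotientGroup.Quotient.commGroup _

/-- The class of a unit of `S` in `UnitsQuot f`. -/
def UnitsQuot.mk {R S : Type*} [CommRing R] [CommRing S] (f : R →+* S) (u : Sˣ) :
    UnitsQuot f :=
  QuotientGroup.mk u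

open IsNilpotent

section Exp

variable {R : Type*} [CommRing R] [Algebra ℚ R]

theorem IsNilpotent.exists_exp_eq_one_add_add_sq_mul {x : R} (hx : IsNilpotent x) :
    ∃ c, exp x = 1 + x + x ^ 2 * c := by
  obtain ⟨k, hk⟩ := hx
  refine ⟨∑ i ∈ Finset.range k, ((i + 2).factorial : ℚ)⁻¹ • x ^ i, ?_⟩
  rw [exp_eq_sum (k := k + 2) (by rw [pow_add, hk, zero_mul]), Finset.sum_range_succ',
    Finset.sum_range_succ', Finset.mul_sum]
  simp only [zero_add, Nat.factorial_one, Nat.factorial_zero, Nat.cast_one, inv_one, pow_one,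
    pow_zero, one_smul, Algebra.mul_smul_comm, ← pow_add, add_comm 2]
  ring

theorem IsNilpotent.exp_eq_one_iff {x : R} (hx : IsNilpotent x) : exp x = 1 ↔ x = 0 := by
  refine ⟨fun h ↦ ?_, fun h ↦ h ▸ exp_zero⟩
  obtain ⟨c, hc⟩ := hx.exists_exp_eq_one_add_add_sq_mul
  have hunit : IsUnit (1 + x * c) := ((Commute.all x c).isNilpotent_mul_right hx).isUnit_one_add
  refine hunit.mul_left_eq_zero.mp ?_
  linear_combination h - hc

theorem IsNilpotent.exp_inj {x y : R} (hx : IsNilpotent x) (hy : IsNilpotent y) :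
    exp x = exp y ↔ x = y := by
  refine ⟨fun h ↦ ?_, congrArg exp⟩
  have hxy : IsNilpotent (x - y) := (Commute.all x y).isNilpotent_sub hx hy
  rw [← sub_eq_zero, ← hxy.exp_eq_one_iff, sub_eq_add_neg,
    exp_add_of_commute (Commute.all x _) hx hy.neg, h, exp_mul_exp_neg_self hy]

theorem Ideal.exp_sub_one_mem {N : Ideal R} (hN : N ≤ nilradical R) {x : R} (hx : x ∈ N) :
    exp x - 1 ∈ N := by
  obtain ⟨c, hc⟩ := (mem_nilradical.mp (hN hx)).exists_exp_eq_one_add_add_sq_mul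
  rw [hc, add_assoc, add_sub_cancel_left]
  exact N.add_mem hx (N.mul_mem_right c (N.pow_mem_of_mem hx 2 two_pos))

/-- Descending induction on `k`: for `j ∈ N^k`, `exp (-j) * (1 + j)` lies in `1 + N^(k+1)`. -/
theorem Ideal.exists_exp_eq_one_add_of_mem_pow {N : Ideal R} {m : ℕ} (hN : N ^ m = ⊥) {k : ℕ}
    (hk : k ≠ 0) {j : R} (hj : j ∈ N ^ k) : ∃ x ∈ N, exp x = 1 + j := by
  have isNilpotent_of_mem : ∀ z ∈ N, IsNilpotent z := fun z hz ↦
    ⟨m, by simpa [hN] using Ideal.pow_mem_pow hz m⟩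
  induction hd : m - k generalizing k j with
  | zero =>
    have : j ∈ N ^ m := Ideal.pow_le_pow_right (by omega) hj
    rw [hN, Ideal.mem_bot] at this
    exact ⟨0, N.zero_mem, by rw [this, exp_zero, add_zero]⟩
  | succ d ih =>
    have hjN : j ∈ N := Ideal.pow_le_self hk hj
    have hj_nil := isNilpotent_of_mem j hjN
    obtain ⟨c, hc⟩ := hj_nil.neg.exists_exp_eq_one_add_add_sq_mul
    have hj2 : j ^ 2 ∈ N ^ (k + 1) :=
      Ideal.pow_le_pow_right (by omega) (pow_mul N k 2 ▸ Ideal.pow_mem_pow hj 2)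
    obtain ⟨y, hyN, hy⟩ := ih (k := k + 1) (by omega)
      ((N ^ (k + 1)).mul_mem_right (c - 1 + j * c) hj2) (by omega)
    refine ⟨j + y, N.add_mem hjN hyN, ?_⟩
    rw [exp_add_of_commute (Commute.all j y) hj_nil (isNilpotent_of_mem y hyN), hy]
    linear_combination (1 + j) * exp_mul_exp_neg_self hj_nil - (1 + j) * exp j * hc

theorem IsNilpotent.exists_exp_eq_one_add {j : R} (hj : IsNilpotent j) :
    ∃ x ∈ Ideal.span {j}, exp x = 1 + j := by
  obtain ⟨m, hm⟩ := hj
  exact Ideal.exists_exp_eq_one_add_of_mem_pow (m := m)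
    (by rw [Ideal.span_singleton_pow, hm, Ideal.span_singleton_eq_bot.mpr rfl]) one_ne_zero
    (by rw [pow_one]; exact Ideal.mem_span_singleton_self j)

theorem Ideal.exists_exp_eq_of_sub_one_mem {N : Ideal R} (hN : N ≤ nilradical R) {u : R}
    (hu : u - 1 ∈ N) : ∃ x ∈ N, exp x = u := by
  obtain ⟨x, hx, hexp⟩ := (mem_nilradical.mp (hN hu)).exists_exp_eq_one_add
  exact ⟨x, (Ideal.span_singleton_le_iff_mem N).mpr hu hx, by rw [hexp, add_sub_cancel]⟩

noncomputable def Ideal.expUnits (N : Ideal R) (hN : N ≤ nilradical R) :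
    Multiplicative N.toAddSubgroup →* Rˣ where
  toFun x := (isUnit_exp (mem_nilradical.mp (hN x.toAdd.2))).unit
  map_one' := Units.ext exp_zero
  map_mul' x y := Units.ext <| exp_add_of_commute (Commute.all _ _)
    (mem_nilradical.mp (hN x.toAdd.2)) (mem_nilradical.mp (hN y.toAdd.2))

end Exp

theorem Ideal.units_map_quotient_mk_surjective {R : Type*} [CommRing R] {N : Ideal R}
    (hN : N ≤ Ideal.jacobson ⊥) :
    Function.Surjective (Units.map (Ideal.Quotient.mk N).toMonoidHom) :=
  IsLocalRing.surjective_units_map_of_local_ringHom _ Ideal.Quotient.mk_surjective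
    (isLocalHom_of_le_jacobson_bot N hN)

theorem Ideal.units_map_quotient_mk_eq_one_iff {R : Type*} [CommRing R] {N : Ideal R} (u : Rˣ) :
    Units.map (Ideal.Quotient.mk N).toMonoidHom u = 1 ↔ (u : R) - 1 ∈ N := by
  rw [Units.ext_iff, ← Ideal.Quotient.eq, map_one]
  rfl

theorem Ideal.map_le_nilradical {R S : Type*} [CommRing R] [CommRing S] (f : R →+* S)
    {I : Ideal R} (hI : I ≤ nilradical R) : I.map f ≤ nilradical S :=
  Ideal.map_le_iff_le_comap.mpr fun _ hx ↦ (mem_nilradical.mp (hI hx)).map f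

namespace UnitsQuot

variable {R S : Type*} [CommRing R] [CommRing S] (f : R →+* S) (I : Ideal R)

noncomputable def quotientMap :
    UnitsQuot f →* UnitsQuot (Ideal.quotientMap (I.map f) f Ideal.le_comap_map) :=
  QuotientGroup.map _ _ (Units.map (Ideal.Quotient.mk (I.map f)).toMonoidHom) <| by
    rintro _ ⟨a, rfl⟩
    exact ⟨Units.map (Ideal.Quotient.mk I).toMonoidHom a, Units.ext rfl⟩

theorem quotientMap_mk (u : Sˣ) :
    quotientMap f I (mk f u) = mk _ (Units.map (Ideal.Quotient.mk (I.map f)).toMonoidHom u) :=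
  rfl

theorem quotientMap_surjective (hI : I.map f ≤ Ideal.jacobson ⊥) :
    Function.Surjective (quotientMap f I) := by
  intro c
  obtain ⟨w, rfl⟩ := QuotientGroup.mk_surjective c
  obtain ⟨u, rfl⟩ := Ideal.units_map_quotient_mk_surjective hI w
  exact ⟨mk f u, rfl⟩

section Kernel

variable [Algebra ℚ S] (hI : I ≤ nilradical R)

theorem mk_expUnits_mem_ker (x : Multiplicative (I.map f).toAddSubgroup) :
    mk f ((I.map f).expUnits (I.map_le_nilradical f hI) x) ∈ (quotientMap f I).ker := by
  have hx := (Ideal.units_map_quotient_mk_eq_one_iff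
    ((I.map f).expUnits (I.map_le_nilradical f hI) x)).mpr
    (Ideal.exp_sub_one_mem (I.map_le_nilradical f hI) x.toAdd.2)
  rw [MonoidHom.mem_ker, quotientMap_mk, hx]
  rfl

theorem exists_mk_expUnits_eq {c : UnitsQuot f} (hc : c ∈ (quotientMap f I).ker) :
    ∃ x, mk f ((I.map f).expUnits (I.map_le_nilradical f hI) x) = c := by
  obtain ⟨u, rfl⟩ := QuotientGroup.mk_surjective c
  obtain ⟨v, hv⟩ := (QuotientGroup.eq_one_iff _).mp hc
  obtain ⟨a, rfl⟩ := Ideal.units_map_quotient_mk_surjective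
    (hI.trans Ideal.radical_le_jacobson) v
  set w := u * (Units.map f.toMonoidHom a)⁻¹
  have hw : Units.map (Ideal.Quotient.mk (I.map f)).toMonoidHom w = 1 := by
    rw [map_mul, map_inv, mul_inv_eq_one, ← hv]
    rfl
  obtain ⟨x, hxJ, hx⟩ := Ideal.exists_exp_eq_of_sub_one_mem (I.map_le_nilradical f hI)
    ((Ideal.units_map_quotient_mk_eq_one_iff w).mp hw)
  have hxw :
      (I.map f).expUnits (I.map_le_nilradical f hI) (Multiplicative.ofAdd ⟨x, hxJ⟩) = w :=
    Units.ext hx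
  refine ⟨Multiplicative.ofAdd ⟨x, hxJ⟩, ?_⟩
  rw [hxw]
  exact QuotientGroup.mk_mul_of_mem u (inv_mem (MonoidHom.mem_range.mpr ⟨a, rfl⟩))

theorem mk_expUnits_eq_one_iff [Algebra ℚ R] (hsat : (I.map f).comap f ≤ I)
    (x : Multiplicative (I.map f).toAddSubgroup) :
    mk f ((I.map f).expUnits (I.map_le_nilradical f hI) x) = 1 ↔
      x.toAdd ∈ (AddSubgroup.map f.toAddMonoidHom I.toAddSubgroup).addSubgroupOf
        (I.map f).toAddSubgroup := by
  have hJ := I.map_le_nilradical f hI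
  have hx : IsNilpotent (x.toAdd : S) := mem_nilradical.mp (hJ x.toAdd.2)
  refine (QuotientGroup.eq_one_iff _).trans ?_
  rw [AddSubgroup.mem_addSubgroupOf, AddSubgroup.mem_map]
  constructor
  · rintro ⟨a, ha⟩
    have hfa : f a = exp (x.toAdd : S) := congrArg Units.val ha
    have ha1 : (a : R) - 1 ∈ I := hsat <| by
      simpa only [Ideal.mem_comap, map_sub, map_one, hfa] using
        Ideal.exp_sub_one_mem hJ x.toAdd.2
    obtain ⟨t, ht, hexp⟩ := Ideal.exists_exp_eq_of_sub_one_mem hI ha1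
    have htx : exp (f t) = exp (x.toAdd : S) := by
      rw [← map_exp (mem_nilradical.mp (hI ht)), hexp, hfa]
    exact ⟨t, ht, ((mem_nilradical.mp (hI ht)).map f |>.exp_inj hx).mp htx⟩
  · rintro ⟨t, ht, htx⟩
    refine ⟨I.expUnits hI (Multiplicative.ofAdd ⟨t, ht⟩), Units.ext ?_⟩
    change f (exp t) = exp (x.toAdd : S)
    rw [map_exp (mem_nilradical.mp (hI ht))]
    exact congrArg exp htx

noncomputable def expKer : (I.map f).toAddSubgroup →+ Additive (quotientMap f I).ker :=
  MonoidHom.toAdditiveRight <|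
    ((QuotientGroup.mk' _).comp ((I.map f).expUnits (I.map_le_nilradical f hI))).codRestrict _
      (mk_expUnits_mem_ker f I hI)

theorem expKer_surjective : Function.Surjective (expKer f I hI) := by
  rintro ⟨c, hc⟩
  obtain ⟨x, hx⟩ := exists_mk_expUnits_eq f I hI hc
  exact ⟨x.toAdd, Subtype.ext hx⟩

theorem ker_expKer [Algebra ℚ R] (hsat : (I.map f).comap f ≤ I) :
    (expKer f I hI).ker = (AddSubgroup.map f.toAddMonoidHom I.toAddSubgroup).addSubgroupOf
      (I.map f).toAddSubgroup := by
  ext x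
  exact AddMonoidHom.mem_ker.trans <|
    Subtype.ext_iff.trans (mk_expUnits_eq_one_iff f I hI hsat (Multiplicative.ofAdd x))

noncomputable def quotientMapKerEquiv [Algebra ℚ R] (hsat : (I.map f).comap f ≤ I) :
    (quotientMap f I).ker ≃* Multiplicative ((I.map f).toAddSubgroup ⧸
      (AddSubgroup.map f.toAddMonoidHom I.toAddSubgroup).addSubgroupOf (I.map f).toAddSubgroup) :=
  AddEquiv.toMultiplicativeRight <|
    ((QuotientAddGroup.quotientAddEquivOfEq (ker_expKer f I hI hsat)).symm.trans
      (QuotientAddGroup.quotientKerEquivOfSurjective _ (expKer_surjective f I hI))).symm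

end Kernel

end UnitsQuot

theorem Ideal.comap_map_nilradical_le {R S : Type*} [CommRing R] [CommRing S] {f : R →+* S}
    (hf : Function.Injective f) : ((nilradical R).map f).comap f ≤ nilradical R := fun a ha ↦ by
  obtain ⟨n, hn⟩ := mem_nilradical.mp (Ideal.map_le_nilradical f le_rfl ha)
  exact mem_nilradical.mpr ⟨n, hf (by rw [map_pow, hn, map_zero])⟩

theorem IsLocalRing.nonempty_algebraRat (A : Type*) [CommRing A] [IsLocalRing A]
    [CharZero (IsLocalRing.ResidueField A)] : Nonempty (Algebra ℚ A) :=
  (EqualCharZero.nonempty_algebraRat_iff A).mpr fun _ hI ↦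
    RingHom.charZero (S := IsLocalRing.ResidueField A)
      (Ideal.Quotient.factor (IsLocalRing.le_maximalIdeal hI))

section NonZeroDivisors

variable {R : Type*} [CommRing R]

theorem mk_mem_nonZeroDivisors_quotient_nilradical {s : R} (hs : s ∈ nonZeroDivisors R) :
    Ideal.Quotient.mk (nilradical R) s ∈ nonZeroDivisors (R ⧸ nilradical R) := by
  refine mem_nonZeroDivisors_iff_right.mpr fun a ha ↦ ?_
  obtain ⟨b, rfl⟩ := Ideal.Quotient.mk_surjective a
  rw [← map_mul, Ideal.Quotient.eq_zero_iff_mem, mem_nilradical] at ha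
  rw [Ideal.Quotient.eq_zero_iff_mem, mem_nilradical]
  obtain ⟨n, hn⟩ := ha
  exact ⟨n, mem_nonZeroDivisors_iff_right.mp (pow_mem hs n) _ (by rw [← mul_pow, hn])⟩

/-- Under `S₁` every zero divisor lies in a minimal prime, hence stays a zero divisor
modulo the nilradical. -/
theorem mem_nonZeroDivisors_of_mk_mem_quotient_nilradical [IsNoetherianRing R]
    (hS1 : ∀ p ∈ associatedPrimes R R, p ∈ minimalPrimes R) {s : R}
    (hs : Ideal.Quotient.mk (nilradical R) s ∈ nonZeroDivisors (R ⧸ nilradical R)) :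
    s ∈ nonZeroDivisors R := by
  by_contra h
  rw [← SetLike.mem_coe, ← Set.mem_compl_iff,
    ← biUnion_associatedPrimes_eq_compl_nonZeroDivisors, Set.mem_iUnion₂] at h
  obtain ⟨p, hp, hsp⟩ := h
  have hpmin : p ∈ (nilradical R).minimalPrimes := by
    rw [nilradical, Ideal.radical_minimalPrimes]
    exact hS1 p hp
  rw [Ideal.minimalPrimes_eq_comap] at hpmin
  obtain ⟨q, hq, rfl⟩ := hpmin
  exact notMem_nonZeroDivisors_of_mem_mem_minimalPrimes (q := q) hsp hq hs

theorem map_nonZeroDivisors_quotient_nilradical [IsNoetherianRing R]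
    (hS1 : ∀ p ∈ associatedPrimes R R, p ∈ minimalPrimes R) :
    (nonZeroDivisors R).map (Ideal.Quotient.mk (nilradical R)) =
      nonZeroDivisors (R ⧸ nilradical R) := by
  refine le_antisymm (Submonoid.map_le_iff_le_comap.mpr fun s hs ↦
    mk_mem_nonZeroDivisors_quotient_nilradical hs) fun t ht ↦ ?_
  obtain ⟨s, rfl⟩ := Ideal.Quotient.mk_surjective t
  exact ⟨s, mem_nonZeroDivisors_of_mk_mem_quotient_nilradical hS1 ht, rfl⟩

theorem isFractionRing_quotient_nilradical [IsNoetherianRing R]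
    (hS1 : ∀ p ∈ associatedPrimes R R, p ∈ minimalPrimes R) (K : Type*) [CommRing K]
    [Algebra R K] [IsFractionRing R K] :
    IsFractionRing (R ⧸ nilradical R) (K ⧸ (nilradical R).map (algebraMap R K)) := by
  unfold IsFractionRing
  rw [← map_nonZeroDivisors_quotient_nilradical hS1]
  exact inferInstanceAs
    (IsLocalization (Algebra.algebraMapSubmonoid (R ⧸ nilradical R) (nonZeroDivisors R)) _)

end NonZeroDivisors

theorem cart_nilradical_exact_sequence_general
    (A : Type*) [CommRing A] [IsLocalRing A] [IsNoetherianRing A]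
    [CharZero (IsLocalRing.ResidueField A)]
    (hS1 : ∀ p ∈ associatedPrimes A A, p ∈ minimalPrimes A) :
    -- `K/IK` is the total quotient ring of `A_red`:
    (∃ e : (FractionRing A ⧸ Ideal.map (algebraMap A (FractionRing A)) (nilradical A))
        ≃+* FractionRing (A ⧸ nilradical A),
      ∀ a : A,
        e (Ideal.Quotient.mk (Ideal.map (algebraMap A (FractionRing A)) (nilradical A))
            (algebraMap A (FractionRing A) a))
          = algebraMap (A ⧸ nilradical A) (FractionRing (A ⧸ nilradical A))
              (Ideal.Quotient.mk (nilradical A) a)) ∧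
    -- the exact sequence `0 → IK/I → Cart A → Cart A_red → 0`:
    (∃ φ : UnitsQuot (algebraMap A (FractionRing A)) →*
        UnitsQuot (Ideal.quotientMap
          (Ideal.map (algebraMap A (FractionRing A)) (nilradical A))
          (algebraMap A (FractionRing A)) Ideal.le_comap_map),
      (∀ u : (FractionRing A)ˣ,
        φ (UnitsQuot.mk _ u)
          = UnitsQuot.mk _ (Units.map (Ideal.Quotient.mk
              (Ideal.map (algebraMap A (FractionRing A)) (nilradical A))).toMonoidHom u)) ∧
      Function.Surjective φ ∧
      Nonempty (φ.ker ≃*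
        Multiplicative
          ((Ideal.map (algebraMap A (FractionRing A)) (nilradical A)).toAddSubgroup ⧸
            ((AddSubgroup.map (algebraMap A (FractionRing A)).toAddMonoidHom
                (nilradical A).toAddSubgroup).addSubgroupOf
              (Ideal.map (algebraMap A (FractionRing A)) (nilradical A)).toAddSubgroup)))) := by
  obtain ⟨_⟩ := IsLocalRing.nonempty_algebraRat A
  have := isFractionRing_quotient_nilradical hS1 (FractionRing A)
  have hsat := Ideal.comap_map_nilradical_le (IsFractionRing.injective A (FractionRing A))
  have hJ := (Ideal.map_le_nilradical (algebraMap A (FractionRing A)) le_rfl).trans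
    Ideal.radical_le_jacobson
  let e := IsLocalization.algEquiv (nonZeroDivisors (A ⧸ nilradical A))
    (FractionRing A ⧸ (nilradical A).map (algebraMap A (FractionRing A)))
    (FractionRing (A ⧸ nilradical A))
  exact ⟨⟨e.toRingEquiv, fun a ↦ e.commutes (Ideal.Quotient.mk _ a)⟩,
    UnitsQuot.quotientMap _ _, UnitsQuot.quotientMap_mk _ _,
    UnitsQuot.quotientMap_surjective _ _ hJ, ⟨UnitsQuot.quotientMapKerEquiv _ _ le_rfl hsat⟩⟩

/-- **Proposition 5.4.** Let `A` be a one-dimensional Noetherian local ring with no embedded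
primes (Serre's condition `S₁`) whose residue field has characteristic zero.  Let `I` be the
nilradical of `A`, `K` the total quotient ring of `A`, and `IK` the ideal of `K` generated by
the image of `I`.  Then `K/IK` is the total quotient ring of `A_red = A/I`, and there is an
exact sequence `0 → IK/I → Cart A → Cart A_red → 0`: the natural map
`Cart A = Kˣ/Aˣ → (K/IK)ˣ/(A_red)ˣ = Cart A_red` is surjective with kernel isomorphic to the
additive group `IK/I`. -/
theorem cart_nilradical_exact_sequence
    (A : Type*) [CommRing A] [IsLocalRing A] [IsNoetherianRing A]
    [CharZero (IsLocalRing.ResidueField A)]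
    (hdim : ringKrullDim A = 1)
    (hS1 : ∀ p ∈ associatedPrimes A A, p ∈ minimalPrimes A) :
    -- `K/IK` is the total quotient ring of `A_red`:
    (∃ e : (FractionRing A ⧸ Ideal.map (algebraMap A (FractionRing A)) (nilradical A))
        ≃+* FractionRing (A ⧸ nilradical A),
      ∀ a : A,
        e (Ideal.Quotient.mk (Ideal.map (algebraMap A (FractionRing A)) (nilradical A))
            (algebraMap A (FractionRing A) a))
          = algebraMap (A ⧸ nilradical A) (FractionRing (A ⧸ nilradical A))
              (Ideal.Quotient.mk (nilradical A) a)) ∧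
    -- the exact sequence `0 → IK/I → Cart A → Cart A_red → 0`:
    (∃ φ : UnitsQuot (algebraMap A (FractionRing A)) →*
        UnitsQuot (Ideal.quotientMap
          (Ideal.map (algebraMap A (FractionRing A)) (nilradical A))
          (algebraMap A (FractionRing A)) Ideal.le_comap_map),
      (∀ u : (FractionRing A)ˣ,
        φ (UnitsQuot.mk _ u)
          = UnitsQuot.mk _ (Units.map (Ideal.Quotient.mk
              (Ideal.map (algebraMap A (FractionRing A)) (nilradical A))).toMonoidHom u)) ∧
      Function.Surjective φ ∧
      Nonempty (φ.ker ≃*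
        Multiplicative
          ((Ideal.map (algebraMap A (FractionRing A)) (nilradical A)).toAddSubgroup ⧸
            ((AddSubgroup.map (algebraMap A (FractionRing A)).toAddMonoidHom
                (nilradical A).toAddSubgroup).addSubgroupOf
              (Ideal.map (algebraMap A (FractionRing A)) (nilradical A)).toAddSubgroup)))) :=
  cart_nilradical_exact_sequence_general A hS1
end
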